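/- arXiv:2307.04126 — 3 statements merged into one kernel-verified Lean document; each statement's English description precedes it below -/
import Mathlib

section
/- Let f be a smooth function on the standard round 2-sphere S² satisfying Δf ≤ f pointwise. Then for any p ∈ S² and any 0 < r₀ < r₁ ≤ π/2, the spherical means satisfy ⨍_{∂B_{r₁}(p)} f ds − ⨍_{∂B_{r₀}(p)} f ds ≤ (‖f‖_{L²(S²)}/√(2π)) (r₁ − r₀). -/
open Real MeasureTheory intervalIntegral

/- We work on the unit round sphere `S²` in geodesic polar coordinates `(r, θ)` centered at a
point `p`.  A smooth function `f` on `S²` is represented by `F : ℝ → ℝ → ℝ`, which is smooth,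
`2π`-periodic in `θ`, and constant in `θ` at the poles `r = 0, π`. -/

open Set


/-- Partial derivative of a two-variable function in direction `v`. -/
noncomputable def pd (v : ℝ × ℝ) (G : ℝ → ℝ → ℝ) (r θ : ℝ) : ℝ :=
  fderiv ℝ (Function.uncurry G) (r, θ) v

lemma pd_smooth {G : ℝ → ℝ → ℝ} (h : ContDiff ℝ (⊤ : ℕ∞) (Function.uncurry G)) (v : ℝ × ℝ) :
    ContDiff ℝ (⊤ : ℕ∞) (Function.uncurry (pd v G)) := by
  have e : Function.uncurry (pd v G) = fun p => fderiv ℝ (Function.uncurry G) p v := by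
    funext p; simp [Function.uncurry, pd]
  rw [e]
  exact (h.fderiv_right (by simp)).clm_apply contDiff_const

lemma pd_fst {G : ℝ → ℝ → ℝ} (h : ContDiff ℝ (⊤ : ℕ∞) (Function.uncurry G)) (r θ : ℝ) :
    HasDerivAt (fun s => G s θ) (pd (1, 0) G r θ) r := by
  have hG : HasFDerivAt (Function.uncurry G) (fderiv ℝ (Function.uncurry G) (r, θ)) (r, θ) :=
    (h.differentiable (by simp) (r, θ)).hasFDerivAt
  have hline : HasDerivAt (fun s : ℝ => ((s, θ) : ℝ × ℝ)) ((1 : ℝ), (0 : ℝ)) r :=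
    (hasDerivAt_id r).prodMk (hasDerivAt_const r θ)
  exact hG.comp_hasDerivAt r hline

lemma pd_snd {G : ℝ → ℝ → ℝ} (h : ContDiff ℝ (⊤ : ℕ∞) (Function.uncurry G)) (r θ : ℝ) :
    HasDerivAt (fun t => G r t) (pd (0, 1) G r θ) θ := by
  have hG : HasFDerivAt (Function.uncurry G) (fderiv ℝ (Function.uncurry G) (r, θ)) (r, θ) :=
    (h.differentiable (by simp) (r, θ)).hasFDerivAt
  have hline : HasDerivAt (fun t : ℝ => ((r, t) : ℝ × ℝ)) ((0 : ℝ), (1 : ℝ)) θ :=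
    (hasDerivAt_const θ r).prodMk (hasDerivAt_id θ)
  exact hG.comp_hasDerivAt θ hline

lemma sect_cont {G : ℝ → ℝ → ℝ} (h : Continuous (Function.uncurry G)) (r : ℝ) :
    Continuous (G r) :=
  h.comp (continuous_const.prodMk continuous_id)

lemma hasDerivAt_intint {G G' : ℝ → ℝ → ℝ}
    (hG : Continuous (Function.uncurry G)) (hG' : Continuous (Function.uncurry G'))
    (hd : ∀ s θ, HasDerivAt (fun u => G u θ) (G' s θ) s) (r : ℝ) :
    HasDerivAt (fun s => ∫ θ in (0:ℝ)..(2*π), G s θ) (∫ θ in (0:ℝ)..(2*π), G' r θ) r := by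
  obtain ⟨C, hC⟩ : ∃ C, ∀ p ∈ (Icc (r-1) (r+1) ×ˢ uIcc (0:ℝ) (2*π)),
      ‖Function.uncurry G' p‖ ≤ C :=
    (isCompact_Icc.prod isCompact_uIcc).exists_bound_of_continuousOn hG'.continuousOn
  refine (intervalIntegral.hasDerivAt_integral_of_dominated_loc_of_deriv_le
    (F := fun s θ => G s θ) (F' := fun s θ => G' s θ) (x₀ := r) (s := Metric.ball r 1)
    (bound := fun _ => C) (Metric.ball_mem_nhds r one_pos) ?_ ?_ ?_ ?_ ?_ ?_).2
  · filter_upwards with x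
    exact ((hG.comp (continuous_const.prodMk continuous_id)).aestronglyMeasurable :
      AEStronglyMeasurable (fun t => G x t) _)
  · exact (hG.comp (continuous_const.prodMk continuous_id)).intervalIntegrable _ _
  · exact (hG'.comp (continuous_const.prodMk continuous_id)).aestronglyMeasurable
  · filter_upwards with t
    intro ht x hx
    refine hC (x, t) ⟨?_, Ioc_subset_Icc_self ht⟩
    rw [Metric.mem_ball, Real.dist_eq] at hx
    have := abs_lt.1 hx
    constructor <;> linarith [this.1, this.2]
  · exact intervalIntegrable_const
  · filter_upwards with t
    intro ht x hx
    exact hd x t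

/-- The Laplace–Beltrami operator on the round `S²` (trace of the Hessian, no negative sign),
in geodesic polar coordinates. -/
noncomputable def sphLap (F : ℝ → ℝ → ℝ) (r θ : ℝ) : ℝ :=
  deriv (fun s => deriv (fun s' => F s' θ) s) r
    + (Real.cos r / Real.sin r) * deriv (fun s => F s θ) r
    + (1 / Real.sin r ^ 2) * deriv (deriv (F r)) θ

/-- The spherical mean `⨍_{∂B_r(p)} f ds = (∫_0^{2π} F(r,θ) dθ) / (2π)` (the circle `∂B_r(p)`
has length `2π sin r` and line element `sin r dθ`). -/
noncomputable def circleAvg (F : ℝ → ℝ → ℝ) (r : ℝ) : ℝ :=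
  (∫ θ in (0:ℝ)..(2*π), F r θ) / (2*π)

/-- The integral of a function over `S²` with the round area element `sin r dr dθ`. -/
noncomputable def sphereIntegral (G : ℝ → ℝ → ℝ) : ℝ :=
  ∫ r in (0:ℝ)..π, ∫ θ in (0:ℝ)..(2*π), G r θ * Real.sin r

/-- The `L²(S²)` norm of a function. -/
noncomputable def sphereL2 (F : ℝ → ℝ → ℝ) : ℝ :=
  Real.sqrt (sphereIntegral (fun r θ => (F r θ)^2))

/-- spherical mean inequality. If `Δf ≤ f` on `S²`, then for any `p` and
`0 < r₀ < r₁ ≤ π/2`, the spherical means satisfy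
`⨍_{∂B_{r₁}(p)} f − ⨍_{∂B_{r₀}(p)} f ≤ (‖f‖_{L²}/√(2π)) (r₁ − r₀)`. -/
theorem spherical_mean_inequality (F : ℝ → ℝ → ℝ)
    (hsmooth : ContDiff ℝ (⊤ : ℕ∞) (Function.uncurry F))
    (hper : ∀ r, Function.Periodic (F r) (2*π))
    (hpole₀ : ∀ θ₁ θ₂, F 0 θ₁ = F 0 θ₂)
    (hpoleπ : ∀ θ₁ θ₂, F π θ₁ = F π θ₂)
    (hlap : ∀ r ∈ Set.Ioo (0:ℝ) π, ∀ θ, sphLap F r θ ≤ F r θ) :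
    ∀ r₀ r₁ : ℝ, 0 < r₀ → r₀ < r₁ → r₁ ≤ π/2 →
      circleAvg F r₁ - circleAvg F r₀ ≤ sphereL2 F / Real.sqrt (2*π) * (r₁ - r₀) := by
  have hpi : (0:ℝ) < π := Real.pi_pos
  have h2pi : (0:ℝ) < 2*π := by positivity
  -- partial derivatives
  set F₁ : ℝ → ℝ → ℝ := pd (1,0) F with hF₁
  set F₂ : ℝ → ℝ → ℝ := pd (1,0) F₁ with hF₂
  set F₃ : ℝ → ℝ → ℝ := pd (1,0) F₂ with hF₃
  set Fθ : ℝ → ℝ → ℝ := pd (0,1) F with hFθ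
  set Fθθ : ℝ → ℝ → ℝ := pd (0,1) Fθ with hFθθ
  have s1 : ContDiff ℝ (⊤ : ℕ∞) (Function.uncurry F₁) := pd_smooth hsmooth _
  have s2 : ContDiff ℝ (⊤ : ℕ∞) (Function.uncurry F₂) := pd_smooth s1 _
  have s3 : ContDiff ℝ (⊤ : ℕ∞) (Function.uncurry F₃) := pd_smooth s2 _
  have sθ : ContDiff ℝ (⊤ : ℕ∞) (Function.uncurry Fθ) := pd_smooth hsmooth _
  have sθθ : ContDiff ℝ (⊤ : ℕ∞) (Function.uncurry Fθθ) := pd_smooth sθ _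
  -- the circle integrals
  set I : ℝ → ℝ := fun r => ∫ θ in (0:ℝ)..(2*π), F r θ with hIdef
  set I' : ℝ → ℝ := fun r => ∫ θ in (0:ℝ)..(2*π), F₁ r θ with hI'def
  set I'' : ℝ → ℝ := fun r => ∫ θ in (0:ℝ)..(2*π), F₂ r θ with hI''def
  have hI : ∀ r, HasDerivAt I (I' r) r :=
    hasDerivAt_intint hsmooth.continuous s1.continuous (fun s θ => pd_fst hsmooth s θ)
  have hI' : ∀ r, HasDerivAt I' (I'' r) r :=
    hasDerivAt_intint s1.continuous s2.continuous (fun s θ => pd_fst s1 s θ)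
  have hI'' : ∀ r, HasDerivAt I'' ((fun r => ∫ θ in (0:ℝ)..(2*π), F₃ r θ) r) r :=
    hasDerivAt_intint s2.continuous s3.continuous (fun s θ => pd_fst s2 s θ)
  have cI : Continuous I := by
    rw [continuous_iff_continuousAt]; exact fun r => (hI r).continuousAt
  have cI' : Continuous I' := by
    rw [continuous_iff_continuousAt]; exact fun r => (hI' r).continuousAt
  have cI'' : Continuous I'' := by
    rw [continuous_iff_continuousAt]; exact fun r => (hI'' r).continuousAt
  -- pointwise Laplacian formula
  have hlapEq : ∀ r θ, sphLap F r θ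
      = F₂ r θ + (Real.cos r / Real.sin r) * F₁ r θ + (1 / Real.sin r ^ 2) * Fθθ r θ := by
    intro r θ
    have e1 : (fun s => deriv (fun s' => F s' θ) s) = fun s => F₁ s θ :=
      funext fun s => (pd_fst hsmooth s θ).deriv
    have e2 : deriv (F r) = Fθ r := funext fun t => (pd_snd hsmooth r t).deriv
    unfold sphLap
    rw [e1, e2, (pd_fst s1 r θ).deriv, (pd_fst hsmooth r θ).deriv,
      (pd_snd sθ r θ).deriv]
  -- the θθ term integrates to zero
  have hzero : ∀ r, (∫ θ in (0:ℝ)..(2*π), Fθθ r θ) = 0 := by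
    intro r
    have hd : ∀ x ∈ uIcc (0:ℝ) (2*π), HasDerivAt (Fθ r) (Fθθ r x) x :=
      fun x _ => pd_snd sθ r x
    rw [intervalIntegral.integral_eq_sub_of_hasDerivAt hd
      ((sect_cont sθθ.continuous r).intervalIntegrable _ _)]
    have hFθper : Fθ r (2*π) = Fθ r 0 := by
      have h1 : HasDerivAt (F r) (Fθ r (0 + 2*π)) (0 + 2*π) := pd_snd hsmooth r (0 + 2*π)
      have h2 : HasDerivAt (fun t => F r (t + 2*π)) (Fθ r (0 + 2*π)) 0 :=
        HasDerivAt.comp_add_const 0 (2*π) h1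
      have h3 : (fun t => F r (t + 2*π)) = F r := funext fun t => hper r t
      rw [h3] at h2
      have h4 : HasDerivAt (F r) (Fθ r 0) 0 := pd_snd hsmooth r 0
      have := h2.unique h4
      rwa [zero_add] at this
    rw [hFθper, sub_self]
  -- integrated Laplacian identity and inequality
  have hLapInt : ∀ r ∈ Set.Ioo (0:ℝ) π,
      (∫ θ in (0:ℝ)..(2*π), sphLap F r θ) = I'' r + (Real.cos r / Real.sin r) * I' r := by
    intro r hr
    have e : (fun θ => sphLap F r θ)
        = fun θ => F₂ r θ + (Real.cos r / Real.sin r) * F₁ r θ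
            + (1 / Real.sin r ^ 2) * Fθθ r θ := funext fun θ => hlapEq r θ
    rw [e]
    have i2 : IntervalIntegrable (fun θ => F₂ r θ) volume 0 (2*π) :=
      (sect_cont s2.continuous r).intervalIntegrable _ _
    have i1 : IntervalIntegrable (fun θ => (Real.cos r / Real.sin r) * F₁ r θ) volume 0 (2*π) :=
      (continuous_const.mul (sect_cont s1.continuous r)).intervalIntegrable _ _
    have iθ : IntervalIntegrable (fun θ => (1 / Real.sin r ^ 2) * Fθθ r θ) volume 0 (2*π) :=
      (continuous_const.mul (sect_cont sθθ.continuous r)).intervalIntegrable _ _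
    rw [intervalIntegral.integral_add (i2.add i1) iθ, intervalIntegral.integral_add i2 i1,
      intervalIntegral.integral_const_mul, intervalIntegral.integral_const_mul, hzero r]
    ring
  have key : ∀ r ∈ Set.Ioo (0:ℝ) π,
      Real.cos r * I' r + Real.sin r * I'' r ≤ Real.sin r * I r := by
    intro r hr
    have hs : 0 < Real.sin r := Real.sin_pos_of_pos_of_lt_pi hr.1 hr.2
    have hmono : I'' r + (Real.cos r / Real.sin r) * I' r ≤ I r := by
      rw [← hLapInt r hr]
      have iLap : IntervalIntegrable (fun θ => sphLap F r θ) volume 0 (2*π) := by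
        have e : (fun θ => sphLap F r θ)
            = fun θ => F₂ r θ + (Real.cos r / Real.sin r) * F₁ r θ
                + (1 / Real.sin r ^ 2) * Fθθ r θ := funext fun θ => hlapEq r θ
        rw [e]
        exact (((sect_cont s2.continuous r).intervalIntegrable _ _).add
          ((continuous_const.mul (sect_cont s1.continuous r)).intervalIntegrable _ _)).add
          ((continuous_const.mul (sect_cont sθθ.continuous r)).intervalIntegrable _ _)
      exact intervalIntegral.integral_mono_on (by positivity) iLap
        ((sect_cont hsmooth.continuous r).intervalIntegrable _ _) (fun θ _ => hlap r hr θ)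
    have := mul_le_mul_of_nonneg_left hmono hs.le
    have hne : Real.sin r ≠ 0 := hs.ne'
    calc Real.cos r * I' r + Real.sin r * I'' r
        = Real.sin r * (I'' r + (Real.cos r / Real.sin r) * I' r) := by field_simp; ring
      _ ≤ Real.sin r * I r := this
  -- derivative of g(r) = sin r * I'(r)
  set hfun : ℝ → ℝ := fun r => Real.cos r * I' r + Real.sin r * I'' r with hfundef
  have hg : ∀ r, HasDerivAt (fun s => Real.sin s * I' s) (hfun r) r :=
    fun r => (Real.hasDerivAt_sin r).mul (hI' r)
  have hcont_h : Continuous hfun :=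
    (Real.continuous_cos.mul cI').add (Real.continuous_sin.mul cI'')
  have key0 : hfun 0 ≤ Real.sin 0 * I 0 := by
    have l1 : Filter.Tendsto hfun (nhdsWithin 0 (Set.Ioi 0)) (nhds (hfun 0)) :=
      (hcont_h.tendsto 0).mono_left nhdsWithin_le_nhds
    have l2 : Filter.Tendsto (fun s => Real.sin s * I s) (nhdsWithin 0 (Set.Ioi 0))
        (nhds (Real.sin 0 * I 0)) :=
      ((Real.continuous_sin.mul cI).tendsto 0).mono_left nhdsWithin_le_nhds
    refine le_of_tendsto_of_tendsto l1 l2 ?_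
    filter_upwards [Ioo_mem_nhdsGT_of_mem (Set.left_mem_Ico.mpr hpi)] with s hs
    exact key s hs
  -- J r = ∫_0^r sin s * I s ds
  set J : ℝ → ℝ := fun r => ∫ s in (0:ℝ)..r, Real.sin s * I s with hJdef
  have hgJ : ∀ r, 0 < r → r ≤ π/2 → Real.sin r * I' r ≤ J r := by
    intro r hr0 hr1
    have hle : ∀ s ∈ Icc (0:ℝ) r, hfun s ≤ Real.sin s * I s := by
      intro s hs
      rcases eq_or_lt_of_le hs.1 with h | h
      · rw [← h]; exact key0
      · exact key s ⟨h, lt_of_le_of_lt (hs.2.trans hr1) (by linarith)⟩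
    have hftc : ∫ s in (0:ℝ)..r, hfun s = Real.sin r * I' r - Real.sin 0 * I' 0 :=
      intervalIntegral.integral_eq_sub_of_hasDerivAt (fun x _ => hg x)
        (hcont_h.intervalIntegrable _ _)
    have hmono := intervalIntegral.integral_mono_on (μ := volume) hr0.le (hcont_h.intervalIntegrable _ _)
      ((Real.continuous_sin.mul cI).intervalIntegrable _ _) hle
    rw [hftc] at hmono
    simpa [Real.sin_zero] using hmono
  -- the L² quantity
  set A : ℝ := sphereIntegral (fun r θ => (F r θ)^2) with hAdef
  set P : ℝ → ℝ := fun s => ∫ θ in (0:ℝ)..(2*π), (F s θ)^2 with hPdef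
  have hsq : ContDiff ℝ (⊤ : ℕ∞) (Function.uncurry (fun r θ => (F r θ)^2)) := by
    have e : Function.uncurry (fun r θ => (F r θ)^2)
        = fun p => (Function.uncurry F p)^2 := rfl
    rw [e]; exact hsmooth.pow 2
  have cP : Continuous P := by
    rw [continuous_iff_continuousAt]
    exact fun r => (hasDerivAt_intint hsq.continuous (pd_smooth hsq (1,0)).continuous
      (fun s θ => pd_fst hsq s θ) r).continuousAt
  have hPnonneg : ∀ s, 0 ≤ P s :=
    fun s => intervalIntegral.integral_nonneg (by positivity) (fun θ _ => sq_nonneg _)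
  -- inner Cauchy–Schwarz quadratic
  have hinner : ∀ (s t : ℝ), 0 ≤ P s - 2*t*I s + t^2*(2*π) := by
    intro s t
    have fc : Continuous (F s) := sect_cont hsmooth.continuous s
    have h0 : 0 ≤ ∫ θ in (0:ℝ)..(2*π), (F s θ - t)^2 :=
      intervalIntegral.integral_nonneg (by positivity) (fun θ _ => sq_nonneg _)
    have e : (fun θ => (F s θ - t)^2)
        = fun θ => ((F s θ)^2 - (2*t)*F s θ) + t^2 := by funext θ; ring
    rw [e, intervalIntegral.integral_add (f := fun θ => (F s θ)^2 - (2*t)*F s θ) (g := fun _ => t^2) (((fc.pow 2).sub (continuous_const.mul fc)).intervalIntegrable _ _)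
        intervalIntegrable_const,
      intervalIntegral.integral_sub (f := fun θ => (F s θ)^2) (g := fun θ => (2*t)*F s θ) ((fc.pow 2).intervalIntegrable _ _)
        ((continuous_const.mul fc).intervalIntegrable _ _),
      intervalIntegral.integral_const_mul, intervalIntegral.integral_const] at h0
    simp only [smul_eq_mul] at h0
    have : (2*π - 0) * t^2 = t^2*(2*π) := by ring
    nlinarith [h0]
  -- A as an integral of sin * P
  have hAeq : A = ∫ s in (0:ℝ)..π, Real.sin s * P s := by
    rw [hAdef]
    unfold sphereIntegral
    congr 1
    funext s
    rw [intervalIntegral.integral_mul_const]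
    ring
  have hAnonneg : 0 ≤ A := by
    rw [hAeq]
    exact intervalIntegral.integral_nonneg hpi.le
      (fun s hs => mul_nonneg (Real.sin_nonneg_of_nonneg_of_le_pi hs.1 hs.2) (hPnonneg s))
  -- main bound on I'
  have hI'bound : ∀ r, 0 < r → r ≤ π/2 → I' r ≤ Real.sqrt A * Real.sqrt (2*π) := by
    intro r hr0 hr1
    have hrπ : r ≤ π := hr1.trans (by linarith)
    have hcos1 : Real.cos r < 1 := by
      have := Real.cos_lt_cos_of_nonneg_of_le_pi le_rfl hrπ hr0
      rwa [Real.cos_zero] at this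
    set W : ℝ := 2*π*(1 - Real.cos r) with hWdef
    have hW : 0 < W := by
      have : 0 < 1 - Real.cos r := by linarith
      positivity
    -- Ar ≤ A
    set Ar : ℝ := ∫ s in (0:ℝ)..r, Real.sin s * P s with hArdef
    have hArA : Ar ≤ A := by
      rw [hAeq]
      have i1 : IntervalIntegrable (fun s => Real.sin s * P s) volume 0 r :=
        (Real.continuous_sin.mul cP).intervalIntegrable _ _
      have i2 : IntervalIntegrable (fun s => Real.sin s * P s) volume r π :=
        (Real.continuous_sin.mul cP).intervalIntegrable _ _
      rw [← intervalIntegral.integral_add_adjacent_intervals i1 i2]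
      have : 0 ≤ ∫ s in r..π, Real.sin s * P s :=
        intervalIntegral.integral_nonneg hrπ
          (fun s hs => mul_nonneg
            (Real.sin_nonneg_of_nonneg_of_le_pi (hr0.le.trans hs.1) hs.2) (hPnonneg s))
      linarith
    -- quadratic in t
    have hquad : ∀ t : ℝ, 0 ≤ W * (t*t) + (-(2*(J r))) * t + Ar := by
      intro t
      have hpt : ∀ s ∈ Icc (0:ℝ) r, 0 ≤ Real.sin s * (P s - 2*t*I s + t^2*(2*π)) :=
        fun s hs => mul_nonneg
          (Real.sin_nonneg_of_nonneg_of_le_pi hs.1 (hs.2.trans hrπ)) (hinner s t)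
      have h0 : 0 ≤ ∫ s in (0:ℝ)..r, Real.sin s * (P s - 2*t*I s + t^2*(2*π)) :=
        intervalIntegral.integral_nonneg hr0.le hpt
      have e : (fun s => Real.sin s * (P s - 2*t*I s + t^2*(2*π)))
          = fun s => (Real.sin s * P s - (2*t)*(Real.sin s * I s)) + (t^2*(2*π)) * Real.sin s := by
        funext s; ring
      have iP : IntervalIntegrable (fun s => Real.sin s * P s) volume 0 r :=
        (Real.continuous_sin.mul cP).intervalIntegrable _ _
      have iI : IntervalIntegrable (fun s => (2*t)*(Real.sin s * I s)) volume 0 r :=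
        (continuous_const.mul (Real.continuous_sin.mul cI)).intervalIntegrable _ _
      have iS : IntervalIntegrable (fun s => (t^2*(2*π)) * Real.sin s) volume 0 r :=
        (continuous_const.mul Real.continuous_sin).intervalIntegrable _ _
      rw [e, intervalIntegral.integral_add (iP.sub iI) iS,
        intervalIntegral.integral_sub iP iI,
        intervalIntegral.integral_const_mul, intervalIntegral.integral_const_mul,
        integral_sin, Real.cos_zero] at h0
      have : W * (t*t) + (-(2*(J r))) * t + Ar
          = Ar - 2*t*(J r) + t^2*(2*π) * (1 - Real.cos r) := by
        rw [hWdef]; ring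
      rw [this]
      linarith [h0]
    have hdis := discrim_le_zero hquad
    rw [discrim] at hdis
    have hJ2 : (J r)^2 ≤ A * W := by
      nlinarith [mul_le_mul_of_nonneg_left hArA hW.le]
    have hsinr : 0 < Real.sin r := Real.sin_pos_of_pos_of_lt_pi hr0 (lt_of_le_of_lt hr1 (by linarith))
    have hJle : J r ≤ Real.sqrt A * Real.sqrt W := by
      calc J r ≤ |J r| := le_abs_self _
        _ = Real.sqrt ((J r)^2) := (Real.sqrt_sq_eq_abs _).symm
        _ ≤ Real.sqrt (A * W) := Real.sqrt_le_sqrt hJ2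
        _ = Real.sqrt A * Real.sqrt W := Real.sqrt_mul hAnonneg _
    have hWle : Real.sqrt W ≤ Real.sqrt (2*π) * Real.sin r := by
      have hcos0 : 0 ≤ Real.cos r :=
        Real.cos_nonneg_of_mem_Icc ⟨by linarith, hr1⟩
      have h1 : W ≤ (2*π) * Real.sin r ^ 2 := by
        have hs2 : Real.sin r ^ 2 = 1 - Real.cos r ^ 2 := Real.sin_sq r
        rw [hWdef]
        nlinarith [Real.cos_le_one r]
      calc Real.sqrt W ≤ Real.sqrt ((2*π) * Real.sin r ^ 2) := Real.sqrt_le_sqrt h1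
        _ = Real.sqrt (2*π) * Real.sin r := by
            rw [Real.sqrt_mul h2pi.le, Real.sqrt_sq hsinr.le]
    have hchain : Real.sin r * I' r ≤ (Real.sqrt A * Real.sqrt (2*π)) * Real.sin r := by
      calc Real.sin r * I' r ≤ J r := hgJ r hr0 hr1
        _ ≤ Real.sqrt A * Real.sqrt W := hJle
        _ ≤ Real.sqrt A * (Real.sqrt (2*π) * Real.sin r) :=
            mul_le_mul_of_nonneg_left hWle (Real.sqrt_nonneg _)
        _ = (Real.sqrt A * Real.sqrt (2*π)) * Real.sin r := by ring
    have := le_of_mul_le_mul_right (by linarith [hchain] : I' r * Real.sin r ≤ (Real.sqrt A * Real.sqrt (2*π)) * Real.sin r) hsinr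
    exact this
  -- conclusion
  intro r₀ r₁ h0 h01 h1
  have hftc : ∫ s in r₀..r₁, I' s = I r₁ - I r₀ :=
    intervalIntegral.integral_eq_sub_of_hasDerivAt (fun x _ => hI x)
      (cI'.intervalIntegrable _ _)
  have hmono : ∫ s in r₀..r₁, I' s ≤ ∫ s in r₀..r₁, (Real.sqrt A * Real.sqrt (2*π)) :=
    intervalIntegral.integral_mono_on h01.le (cI'.intervalIntegrable _ _)
      intervalIntegrable_const
      (fun s hs => hI'bound s (lt_of_lt_of_le h0 hs.1) (hs.2.trans h1))
  rw [hftc, intervalIntegral.integral_const, smul_eq_mul] at hmono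
  have hcirc : circleAvg F r₁ - circleAvg F r₀ = (I r₁ - I r₀) / (2*π) := by
    unfold circleAvg
    rw [hIdef]
    ring
  rw [hcirc]
  have hsq2π : Real.sqrt (2*π) * Real.sqrt (2*π) = 2*π := Real.mul_self_sqrt h2pi.le
  have hL : sphereL2 F = Real.sqrt A := rfl
  rw [hL]
  have hsqrtpos : 0 < Real.sqrt (2*π) := Real.sqrt_pos.mpr h2pi
  have hrhs : Real.sqrt A / Real.sqrt (2*π) * (r₁ - r₀)
      = ((r₁ - r₀) * (Real.sqrt A * Real.sqrt (2*π))) / (2*π) := by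
    rw [← hsq2π]
    field_simp
    simp only [Real.sqrt_sq (Real.sqrt_nonneg _)]
  rw [hrhs]
  exact div_le_div_of_nonneg_right hmono h2pi.le
end

section
/- Let f be a smooth function on the standard round 2-sphere S² satisfying Δf ≤ f pointwise. Then for any p ∈ S² and any 0 < r ≤ π/2, one has ⨍_{∂B_r(p)} f ds − f(p) ≤ (‖f‖_{L²(S²)}/√(2π)) · r. -/
open Real MeasureTheory intervalIntegral

section Aux
open Function Set Metric

private lemma pd_smooth_s2 {u : ℝ × ℝ → ℝ} (hu : ContDiff ℝ (⊤ : ℕ∞) u) (v : ℝ × ℝ) :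
    ContDiff ℝ (⊤ : ℕ∞) (fun p => fderiv ℝ u p v) :=
  (hu.fderiv_right (by simp)).clm_apply contDiff_const

private lemma hasDerivAt_fst {u : ℝ × ℝ → ℝ} (hu : ContDiff ℝ (⊤ : ℕ∞) u) (r θ : ℝ) :
    HasDerivAt (fun s => u (s, θ)) (fderiv ℝ u (r, θ) (1, 0)) r := by
  have h1 : HasDerivAt (fun s : ℝ => (s, θ)) ((1:ℝ), (0:ℝ)) r :=
    (hasDerivAt_id r).prodMk (hasDerivAt_const r θ)
  exact ((hu.differentiable (by simp) (r, θ)).hasFDerivAt).comp_hasDerivAt r h1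

private lemma hasDerivAt_snd {u : ℝ × ℝ → ℝ} (hu : ContDiff ℝ (⊤ : ℕ∞) u) (r θ : ℝ) :
    HasDerivAt (fun t => u (r, t)) (fderiv ℝ u (r, θ) (0, 1)) θ := by
  have h1 : HasDerivAt (fun t : ℝ => (r, t)) ((0:ℝ), (1:ℝ)) θ :=
    (hasDerivAt_const θ r).prodMk (hasDerivAt_id θ)
  exact ((hu.differentiable (by simp) (r, θ)).hasFDerivAt).comp_hasDerivAt θ h1

private lemma hasDerivAt_intParam {u : ℝ × ℝ → ℝ} (hu : ContDiff ℝ (⊤ : ℕ∞) u) (a b r : ℝ) :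
    HasDerivAt (fun s => ∫ θ in a..b, u (s, θ))
      (∫ θ in a..b, fderiv ℝ u (r, θ) (1, 0)) r := by
  obtain ⟨C, hC⟩ := ((isCompact_Icc (a := r - 1) (b := r + 1)).prod
      (isCompact_uIcc (a := a) (b := b))).exists_bound_of_continuousOn
      ((pd_smooth_s2 hu (1, 0)).continuous.continuousOn)
  refine (intervalIntegral.hasDerivAt_integral_of_dominated_loc_of_deriv_le
      (F := fun s θ => u (s, θ)) (F' := fun s θ => fderiv ℝ u (s, θ) (1, 0))
      (bound := fun _ => C) (Metric.ball_mem_nhds r one_pos) ?_ ?_ ?_ ?_ ?_ ?_).2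
  · exact Filter.Eventually.of_forall fun x =>
      (hu.continuous.comp (Continuous.prodMk_right x)).aestronglyMeasurable
  · exact (hu.continuous.comp (Continuous.prodMk_right r)).intervalIntegrable a b
  · exact ((pd_smooth_s2 hu (1, 0)).continuous.comp (Continuous.prodMk_right r)).aestronglyMeasurable
  · refine Filter.Eventually.of_forall fun t ht x hx => hC _ ⟨?_, uIoc_subset_uIcc ht⟩
    rw [Real.ball_eq_Ioo] at hx
    exact Ioo_subset_Icc_self hx
  · exact intervalIntegrable_const
  · exact Filter.Eventually.of_forall fun t _ x _ => hasDerivAt_fst hu x t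

private lemma cs_aux {g h : ℝ → ℝ} (hg : Continuous g) (hh : Continuous h) {a b : ℝ}
    (hab : a ≤ b) :
    (∫ x in a..b, g x * h x) ^ 2 ≤ (∫ x in a..b, g x ^ 2) * (∫ x in a..b, h x ^ 2) := by
  set Igh := ∫ x in a..b, g x * h x with hIgh
  set Ig := ∫ x in a..b, g x ^ 2 with hIg
  set Ih := ∫ x in a..b, h x ^ 2 with hIh
  have hgi : IntervalIntegrable (fun y => g y ^ 2) volume a b :=
    ((hg.pow 2)).intervalIntegrable a b
  have hhi : IntervalIntegrable (fun y => h y ^ 2) volume a b :=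
    ((hh.pow 2)).intervalIntegrable a b
  have hghi : IntervalIntegrable (fun y => g y * h y) volume a b :=
    (hg.mul hh).intervalIntegrable a b
  have inner : ∀ x : ℝ, (∫ y in a..b, (g x * h y - g y * h x) ^ 2)
      = g x ^ 2 * Ih - 2 * (g x * h x) * Igh + h x ^ 2 * Ig := by
    intro x
    have e : (fun y => (g x * h y - g y * h x) ^ 2)
        = fun y => (g x ^ 2 * h y ^ 2 - 2 * (g x * h x) * (g y * h y)) + h x ^ 2 * g y ^ 2 := by
      funext y; ring
    rw [e, intervalIntegral.integral_add (((hhi.const_mul _).sub (hghi.const_mul _)))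
        (hgi.const_mul _),
      intervalIntegral.integral_sub (hhi.const_mul _) (hghi.const_mul _),
      intervalIntegral.integral_const_mul, intervalIntegral.integral_const_mul,
      intervalIntegral.integral_const_mul]
  have key : (0:ℝ) ≤ ∫ x in a..b, (g x ^ 2 * Ih - 2 * (g x * h x) * Igh + h x ^ 2 * Ig) := by
    have : (fun x => g x ^ 2 * Ih - 2 * (g x * h x) * Igh + h x ^ 2 * Ig)
        = fun x => ∫ y in a..b, (g x * h y - g y * h x) ^ 2 := by
      funext x; rw [inner x]
    rw [this]
    exact intervalIntegral.integral_nonneg hab fun x _ =>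
      intervalIntegral.integral_nonneg hab fun y _ => sq_nonneg _
  have expand : (∫ x in a..b, (g x ^ 2 * Ih - 2 * (g x * h x) * Igh + h x ^ 2 * Ig))
      = Ig * Ih - 2 * Igh * Igh + Ih * Ig := by
    rw [intervalIntegral.integral_add ((hgi.mul_const _).sub ((hghi.const_mul _).mul_const _))
        (hhi.mul_const _),
      intervalIntegral.integral_sub (hgi.mul_const _) ((hghi.const_mul _).mul_const _),
      intervalIntegral.integral_mul_const, intervalIntegral.integral_mul_const,
      intervalIntegral.integral_const_mul, intervalIntegral.integral_mul_const]
  rw [expand] at key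
  nlinarith [key]

end Aux

/-- If `Δf ≤ f` on `S²`, then for any `p` and `0 < r ≤ π/2`,
`⨍_{∂B_r(p)} f ds − f(p) ≤ (‖f‖_{L²(S²)}/√(2π)) · r`.  Here `f(p) = F 0 0` is the value at the
center of the polar coordinates. -/
theorem spherical_mean_inequality_at_center (F : ℝ → ℝ → ℝ)
    (hsmooth : ContDiff ℝ (⊤ : ℕ∞) (Function.uncurry F))
    (hper : ∀ r, Function.Periodic (F r) (2*π))
    (hpole₀ : ∀ θ₁ θ₂, F 0 θ₁ = F 0 θ₂)
    (hpoleπ : ∀ θ₁ θ₂, F π θ₁ = F π θ₂)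
    (hlap : ∀ r ∈ Set.Ioo (0:ℝ) π, ∀ θ, sphLap F r θ ≤ F r θ) :
    ∀ r : ℝ, 0 < r → r ≤ π/2 →
      circleAvg F r - F 0 0 ≤ sphereL2 F / Real.sqrt (2*π) * r := by
  intro r hr hrh
  have pi_pos := Real.pi_pos
  have h2pi : (0:ℝ) ≤ 2*π := by positivity
  have hu : ContDiff ℝ (⊤ : ℕ∞) (Function.uncurry F) := hsmooth
  set d1 : ℝ × ℝ → ℝ := fun p => fderiv ℝ (Function.uncurry F) p (1, 0) with hd1_def
  have hd1 : ContDiff ℝ (⊤ : ℕ∞) d1 := pd_smooth_s2 hu _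
  set d2 : ℝ × ℝ → ℝ := fun p => fderiv ℝ d1 p (1, 0) with hd2_def
  have hd2 : ContDiff ℝ (⊤ : ℕ∞) d2 := pd_smooth_s2 hd1 _
  set dt : ℝ × ℝ → ℝ := fun p => fderiv ℝ (Function.uncurry F) p (0, 1) with hdt_def
  have hdt : ContDiff ℝ (⊤ : ℕ∞) dt := pd_smooth_s2 hu _
  set dtt : ℝ × ℝ → ℝ := fun p => fderiv ℝ dt p (0, 1) with hdtt_def
  have hdtt : ContDiff ℝ (⊤ : ℕ∞) dtt := pd_smooth_s2 hdt _
  -- identification of partial derivatives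
  have e1 : ∀ s θ, deriv (fun s' => F s' θ) s = d1 (s, θ) := fun s θ =>
    (hasDerivAt_fst hu s θ).deriv
  have e2 : ∀ s θ, deriv (fun s' => deriv (fun s'' => F s'' θ) s') s = d2 (s, θ) := by
    intro s θ
    have he : (fun s' => deriv (fun s'' => F s'' θ) s') = fun s' => d1 (s', θ) :=
      funext fun s' => e1 s' θ
    rw [he]
    exact (hasDerivAt_fst hd1 s θ).deriv
  have et : ∀ s θ, deriv (F s) θ = dt (s, θ) := fun s θ => (hasDerivAt_snd hu s θ).deriv
  have ett : ∀ s θ, deriv (deriv (F s)) θ = dtt (s, θ) := by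
    intro s θ
    have he : deriv (F s) = fun t => dt (s, t) := funext fun t => et s t
    rw [he]
    exact (hasDerivAt_snd hdt s θ).deriv
  -- the θθ-integral vanishes by periodicity
  have hItt : ∀ s : ℝ, (∫ θ in (0:ℝ)..(2*π), dtt (s, θ)) = 0 := by
    intro s
    have he : (fun θ => dtt (s, θ)) = deriv (deriv (F s)) := funext fun θ => (ett s θ).symm
    have he2 : deriv (F s) = fun t => dt (s, t) := funext fun t => et s t
    have hdiff : ∀ θ ∈ Set.uIcc (0:ℝ) (2*π), DifferentiableAt ℝ (deriv (F s)) θ := by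
      intro θ _
      rw [he2]
      exact (hasDerivAt_snd hdt s θ).differentiableAt
    have hint : IntervalIntegrable (deriv (deriv (F s))) volume 0 (2*π) := by
      rw [← he]
      exact (hdtt.continuous.comp (Continuous.prodMk_right s)).intervalIntegrable _ _
    have hsub := intervalIntegral.integral_deriv_eq_sub hdiff hint
    have hperd : deriv (F s) (2*π) = deriv (F s) 0 := by
      have h0 : (fun t => F s (t + 2*π)) = F s := funext fun t => hper s t
      calc deriv (F s) (2*π) = deriv (F s) (0 + 2*π) := by norm_num
        _ = deriv (fun t => F s (t + 2*π)) 0 := (deriv_comp_add_const (F s) (2*π) 0).symm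
        _ = deriv (F s) 0 := by rw [h0]
    calc (∫ θ in (0:ℝ)..(2*π), dtt (s, θ)) = ∫ θ in (0:ℝ)..(2*π), deriv (deriv (F s)) θ := by
          rw [he]
      _ = deriv (F s) (2*π) - deriv (F s) 0 := hsub
      _ = 0 := by rw [hperd, sub_self]
  -- derivatives of the θ-integrals
  have hI0' : ∀ s : ℝ, HasDerivAt (fun x => ∫ θ in (0:ℝ)..(2*π), F x θ)
      (∫ θ in (0:ℝ)..(2*π), d1 (s, θ)) s := fun s => hasDerivAt_intParam hu 0 (2*π) s
  have hI1' : ∀ s : ℝ, HasDerivAt (fun x => ∫ θ in (0:ℝ)..(2*π), d1 (x, θ))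
      (∫ θ in (0:ℝ)..(2*π), d2 (s, θ)) s := fun s => hasDerivAt_intParam hd1 0 (2*π) s
  have hI0c : Continuous (fun x => ∫ θ in (0:ℝ)..(2*π), F x θ) := by
    have hd : Differentiable ℝ (fun x => ∫ θ in (0:ℝ)..(2*π), F x θ) :=
      fun s => (hI0' s).differentiableAt
    exact hd.continuous
  have hI1c : Continuous (fun x => ∫ θ in (0:ℝ)..(2*π), d1 (x, θ)) := by
    have hd : Differentiable ℝ (fun x => ∫ θ in (0:ℝ)..(2*π), d1 (x, θ)) :=
      fun s => (hI1' s).differentiableAt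
    exact hd.continuous
  have hI2c : Continuous (fun x => ∫ θ in (0:ℝ)..(2*π), d2 (x, θ)) := by
    have hd : Differentiable ℝ (fun x => ∫ θ in (0:ℝ)..(2*π), d2 (x, θ)) :=
      fun s => (hasDerivAt_intParam hd2 0 (2*π) s).differentiableAt
    exact hd.continuous
  have hsq : ContDiff ℝ (⊤ : ℕ∞) (fun p : ℝ × ℝ => (Function.uncurry F p)^2) := hu.pow 2
  have hIJc : Continuous (fun x => ∫ θ in (0:ℝ)..(2*π), (F x θ)^2) := by
    have hd : Differentiable ℝ (fun x => ∫ θ in (0:ℝ)..(2*π), (F x θ)^2) :=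
      fun s => (hasDerivAt_intParam hsq 0 (2*π) s).differentiableAt
    exact hd.continuous
  have hIJ0 : ∀ s : ℝ, 0 ≤ ∫ θ in (0:ℝ)..(2*π), (F s θ)^2 := fun s =>
    intervalIntegral.integral_nonneg h2pi fun θ _ => sq_nonneg _
  -- key differential inequality, integrated in θ
  have hkey : ∀ t ∈ Set.Ioo (0:ℝ) π,
      Real.cos t * (∫ θ in (0:ℝ)..(2*π), d1 (t, θ)) + Real.sin t * (∫ θ in (0:ℝ)..(2*π), d2 (t, θ))
        ≤ Real.sin t * ∫ θ in (0:ℝ)..(2*π), F t θ := by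
    intro t ht
    have hsin : 0 < Real.sin t := Real.sin_pos_of_pos_of_lt_pi ht.1 ht.2
    have hineq : ∀ θ, d2 (t, θ) + (Real.cos t / Real.sin t) * d1 (t, θ)
        + (1 / Real.sin t ^ 2) * dtt (t, θ) ≤ F t θ := by
      intro θ
      have h := hlap t ht θ
      unfold sphLap at h
      rwa [e2 t θ, e1 t θ, ett t θ] at h
    have hc2 : Continuous (fun θ => d2 (t, θ)) := hd2.continuous.comp (Continuous.prodMk_right t)
    have hc1 : Continuous (fun θ => d1 (t, θ)) := hd1.continuous.comp (Continuous.prodMk_right t)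
    have hctt : Continuous (fun θ => dtt (t, θ)) := hdtt.continuous.comp (Continuous.prodMk_right t)
    have hcF : Continuous (fun θ => F t θ) := hu.continuous.comp (Continuous.prodMk_right t)
    have hInt : (∫ θ in (0:ℝ)..(2*π), (d2 (t, θ) + (Real.cos t / Real.sin t) * d1 (t, θ)
        + (1 / Real.sin t ^ 2) * dtt (t, θ))) ≤ ∫ θ in (0:ℝ)..(2*π), F t θ := by
      refine intervalIntegral.integral_mono_on h2pi ?_ (hcF.intervalIntegrable _ _)
        fun θ _ => hineq θ
      exact ((hc2.add (continuous_const.mul hc1)).add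
        (continuous_const.mul hctt)).intervalIntegrable _ _
    have hLHS : (∫ θ in (0:ℝ)..(2*π), (d2 (t, θ) + (Real.cos t / Real.sin t) * d1 (t, θ)
        + (1 / Real.sin t ^ 2) * dtt (t, θ)))
        = (∫ θ in (0:ℝ)..(2*π), d2 (t, θ))
          + (Real.cos t / Real.sin t) * ∫ θ in (0:ℝ)..(2*π), d1 (t, θ) := by
      rw [intervalIntegral.integral_add (f := fun θ => d2 (t, θ) + (Real.cos t / Real.sin t) * d1 (t, θ))
          (g := fun θ => (1 / Real.sin t ^ 2) * dtt (t, θ)) ((hc2.intervalIntegrable _ _).add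
          ((continuous_const.mul hc1).intervalIntegrable _ _))
          ((continuous_const.mul hctt).intervalIntegrable _ _),
        intervalIntegral.integral_add (f := fun θ => d2 (t, θ))
          (g := fun θ => (Real.cos t / Real.sin t) * d1 (t, θ)) (hc2.intervalIntegrable _ _)
          ((continuous_const.mul hc1).intervalIntegrable _ _),
        intervalIntegral.integral_const_mul, intervalIntegral.integral_const_mul, hItt t,
        mul_zero, add_zero]
    rw [hLHS] at hInt
    have := mul_le_mul_of_nonneg_left hInt hsin.le
    have hs : Real.sin t * ((Real.cos t / Real.sin t)
        * ∫ θ in (0:ℝ)..(2*π), d1 (t, θ))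
        = Real.cos t * ∫ θ in (0:ℝ)..(2*π), d1 (t, θ) := by
      field_simp
    nlinarith [this]
  -- fundamental theorem of calculus for B(t) = sin t * I1 t
  have hftc : ∀ t : ℝ, 0 ≤ t →
      Real.sin t * (∫ θ in (0:ℝ)..(2*π), d1 (t, θ))
        = ∫ s in (0:ℝ)..t, (Real.cos s * (∫ θ in (0:ℝ)..(2*π), d1 (s, θ))
            + Real.sin s * (∫ θ in (0:ℝ)..(2*π), d2 (s, θ))) := by
    intro t ht
    have hder : ∀ s ∈ Set.uIcc (0:ℝ) t,
        HasDerivAt (fun x => Real.sin x * ∫ θ in (0:ℝ)..(2*π), d1 (x, θ))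
          (Real.cos s * (∫ θ in (0:ℝ)..(2*π), d1 (s, θ))
            + Real.sin s * (∫ θ in (0:ℝ)..(2*π), d2 (s, θ))) s :=
      fun s _ => (Real.hasDerivAt_sin s).mul (hI1' s)
    have := intervalIntegral.integral_eq_sub_of_hasDerivAt hder
      (((Real.continuous_cos.mul hI1c).add (Real.continuous_sin.mul hI2c)).intervalIntegrable _ _)
    rw [this]
    simp
  -- set S = full sphere integral of F^2 (in iterated form)
  set S : ℝ := ∫ s in (0:ℝ)..π, (∫ θ in (0:ℝ)..(2*π), (F s θ)^2) * Real.sin s with hS_def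
  have hS0 : 0 ≤ S := by
    rw [hS_def]
    exact intervalIntegral.integral_nonneg pi_pos.le fun s hs =>
      mul_nonneg (hIJ0 s) (Real.sin_nonneg_of_nonneg_of_le_pi hs.1 hs.2)
  -- pointwise Cauchy-Schwarz in θ
  have hCSθ : ∀ s : ℝ, (∫ θ in (0:ℝ)..(2*π), F s θ)^2
      ≤ (2*π) * ∫ θ in (0:ℝ)..(2*π), (F s θ)^2 := by
    intro s
    have hcF : Continuous (fun θ => F s θ) := hu.continuous.comp (Continuous.prodMk_right s)
    have h := cs_aux (g := fun _ => (1:ℝ)) (h := fun θ => F s θ) continuous_const hcF h2pi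
    simpa using h
  -- the main bound on I1 t for 0 < t ≤ π/2
  have hI1bound : ∀ t : ℝ, 0 < t → t ≤ π/2 →
      (∫ θ in (0:ℝ)..(2*π), d1 (t, θ)) ≤ Real.sqrt (2*π) * Real.sqrt S := by
    intro t ht0 htle
    have htπ : t < π := lt_of_le_of_lt htle (by linarith)
    have hsin : 0 < Real.sin t := Real.sin_pos_of_pos_of_lt_pi ht0 htπ
    have hsinnn : ∀ s ∈ Set.uIcc (0:ℝ) t, 0 ≤ Real.sin s := by
      intro s hs
      rw [Set.uIcc_of_le ht0.le] at hs
      exact Real.sin_nonneg_of_nonneg_of_le_pi hs.1 (le_trans hs.2 (by linarith))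
    have hIcc : ∀ s ∈ Set.Icc (0:ℝ) t, 0 ≤ Real.sin s := fun s hs =>
      hsinnn s (by rwa [Set.uIcc_of_le ht0.le])
    -- step 1: B t ≤ ∫₀ᵗ sin s * I0 s via FTC and ae comparison
    have hmono : (∫ s in (0:ℝ)..t, (Real.cos s * (∫ θ in (0:ℝ)..(2*π), d1 (s, θ))
          + Real.sin s * (∫ θ in (0:ℝ)..(2*π), d2 (s, θ))))
        ≤ ∫ s in (0:ℝ)..t, Real.sin s * ∫ θ in (0:ℝ)..(2*π), F s θ := by
      refine intervalIntegral.integral_mono_ae_restrict ht0.le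
        (((Real.continuous_cos.mul hI1c).add
          (Real.continuous_sin.mul hI2c)).intervalIntegrable _ _)
        ((Real.continuous_sin.mul hI0c).intervalIntegrable _ _) ?_
      have hz : (volume.restrict (Set.Icc (0:ℝ) t)) {(0:ℝ)} = 0 := by
        rw [Measure.restrict_apply (measurableSet_singleton 0)]
        exact measure_mono_null Set.inter_subset_left (Real.volume_singleton)
      have h0 : ∀ᵐ s ∂(volume.restrict (Set.Icc (0:ℝ) t)), s ≠ 0 := by
        rw [MeasureTheory.ae_iff]
        convert hz using 2
        ext x
        simp
      filter_upwards [h0, MeasureTheory.ae_restrict_mem measurableSet_Icc] with s hs0 hsmem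
      have hsIoo : s ∈ Set.Ioo (0:ℝ) π :=
        ⟨lt_of_le_of_ne hsmem.1 (Ne.symm hs0), lt_of_le_of_lt hsmem.2 htπ⟩
      exact hkey s hsIoo
    have hBle : Real.sin t * (∫ θ in (0:ℝ)..(2*π), d1 (t, θ))
        ≤ ∫ s in (0:ℝ)..t, Real.sin s * ∫ θ in (0:ℝ)..(2*π), F s θ := by
      rw [hftc t ht0.le]; exact hmono
    -- step 2: Cauchy-Schwarz in s
    have hsplit : (∫ s in (0:ℝ)..t, Real.sin s * ∫ θ in (0:ℝ)..(2*π), F s θ)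
        = ∫ s in (0:ℝ)..t, (Real.sqrt (Real.sin s))
            * (Real.sqrt (Real.sin s) * ∫ θ in (0:ℝ)..(2*π), F s θ) := by
      refine intervalIntegral.integral_congr fun s hs => ?_
      rw [← mul_assoc, Real.mul_self_sqrt (hsinnn s hs)]
    have hcssqrt : Continuous (fun s => Real.sqrt (Real.sin s)) :=
      Real.continuous_sqrt.comp Real.continuous_sin
    have hcs2 := cs_aux (g := fun s => Real.sqrt (Real.sin s))
      (h := fun s => Real.sqrt (Real.sin s) * ∫ θ in (0:ℝ)..(2*π), F s θ)
      hcssqrt (hcssqrt.mul hI0c) ht0.le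
    have hg2 : (∫ s in (0:ℝ)..t, (Real.sqrt (Real.sin s))^2) = 1 - Real.cos t := by
      rw [intervalIntegral.integral_congr
        (fun s hs => (Real.sq_sqrt (hsinnn s hs) : (Real.sqrt (Real.sin s))^2 = Real.sin s)),
        integral_sin, Real.cos_zero]
    have hh2 : (∫ s in (0:ℝ)..t, (Real.sqrt (Real.sin s) * ∫ θ in (0:ℝ)..(2*π), F s θ)^2)
        = ∫ s in (0:ℝ)..t, Real.sin s * (∫ θ in (0:ℝ)..(2*π), F s θ)^2 := by
      refine intervalIntegral.integral_congr fun s hs => ?_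
      rw [mul_pow, Real.sq_sqrt (hsinnn s hs)]
    -- step 3: bound the weighted L² integral by S
    have hwL2 : (∫ s in (0:ℝ)..t, Real.sin s * (∫ θ in (0:ℝ)..(2*π), F s θ)^2)
        ≤ (2*π) * S := by
      have hstep : (∫ s in (0:ℝ)..t, Real.sin s * (∫ θ in (0:ℝ)..(2*π), F s θ)^2)
          ≤ ∫ s in (0:ℝ)..t, (2*π) * ((∫ θ in (0:ℝ)..(2*π), (F s θ)^2) * Real.sin s) := by
        refine intervalIntegral.integral_mono_on ht0.le
          ((Real.continuous_sin.mul (hI0c.pow 2)).intervalIntegrable _ _)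
          ((continuous_const.mul (hIJc.mul Real.continuous_sin)).intervalIntegrable _ _)
          fun s hs => ?_
        have h1 := mul_le_mul_of_nonneg_left (hCSθ s) (hIcc s hs)
        nlinarith [h1]
      have hconst : (∫ s in (0:ℝ)..t, (2*π) * ((∫ θ in (0:ℝ)..(2*π), (F s θ)^2) * Real.sin s))
          = (2*π) * ∫ s in (0:ℝ)..t, (∫ θ in (0:ℝ)..(2*π), (F s θ)^2) * Real.sin s :=
        intervalIntegral.integral_const_mul _ _
      have htail : (∫ s in (0:ℝ)..t, (∫ θ in (0:ℝ)..(2*π), (F s θ)^2) * Real.sin s) ≤ S := by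
        have hi1 : IntervalIntegrable
            (fun s => (∫ θ in (0:ℝ)..(2*π), (F s θ)^2) * Real.sin s) volume 0 t :=
          (hIJc.mul Real.continuous_sin).intervalIntegrable _ _
        have hi2 : IntervalIntegrable
            (fun s => (∫ θ in (0:ℝ)..(2*π), (F s θ)^2) * Real.sin s) volume t π :=
          (hIJc.mul Real.continuous_sin).intervalIntegrable _ _
        have hadd := intervalIntegral.integral_add_adjacent_intervals hi1 hi2
        have hnn : 0 ≤ ∫ s in t..π, (∫ θ in (0:ℝ)..(2*π), (F s θ)^2) * Real.sin s :=
          intervalIntegral.integral_nonneg htπ.le fun s hs =>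
            mul_nonneg (hIJ0 s)
              (Real.sin_nonneg_of_nonneg_of_le_pi (le_trans ht0.le hs.1) hs.2)
        rw [hS_def]
        linarith [hadd, hnn]
      calc (∫ s in (0:ℝ)..t, Real.sin s * (∫ θ in (0:ℝ)..(2*π), F s θ)^2)
          ≤ (2*π) * ∫ s in (0:ℝ)..t, (∫ θ in (0:ℝ)..(2*π), (F s θ)^2) * Real.sin s := by
            rw [← hconst]; exact hstep
        _ ≤ (2*π) * S := by nlinarith [htail]
    -- assemble: (∫ sin * I0)² ≤ (1 - cos t) * (2π S)
    have hsq' : (∫ s in (0:ℝ)..t, Real.sin s * ∫ θ in (0:ℝ)..(2*π), F s θ)^2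
        ≤ (1 - Real.cos t) * ((2*π) * S) := by
      have hcos1 : Real.cos t ≤ 1 := Real.cos_le_one t
      calc (∫ s in (0:ℝ)..t, Real.sin s * ∫ θ in (0:ℝ)..(2*π), F s θ)^2
          = (∫ s in (0:ℝ)..t, (Real.sqrt (Real.sin s))
              * (Real.sqrt (Real.sin s) * ∫ θ in (0:ℝ)..(2*π), F s θ))^2 := by rw [hsplit]
        _ ≤ (∫ s in (0:ℝ)..t, (Real.sqrt (Real.sin s))^2)
              * ∫ s in (0:ℝ)..t, (Real.sqrt (Real.sin s) * ∫ θ in (0:ℝ)..(2*π), F s θ)^2 :=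
            hcs2
        _ = (1 - Real.cos t) * ∫ s in (0:ℝ)..t, Real.sin s * (∫ θ in (0:ℝ)..(2*π), F s θ)^2 := by
            rw [hg2, hh2]
        _ ≤ (1 - Real.cos t) * ((2*π) * S) :=
            mul_le_mul_of_nonneg_left hwL2 (by linarith)
    -- step 4: conclude via √(1-cos t) ≤ sin t on (0, π/2]
    have hcosnn : 0 ≤ Real.cos t :=
      Real.cos_nonneg_of_mem_Icc ⟨by linarith, htle⟩
    have h1mc : (0:ℝ) ≤ 1 - Real.cos t := by linarith [Real.cos_le_one t]
    have hsqrtle : Real.sqrt (1 - Real.cos t) ≤ Real.sin t := by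
      have h1 : 1 - Real.cos t ≤ Real.sin t ^ 2 := by
        rw [Real.sin_sq]
        nlinarith [Real.cos_le_one t]
      calc Real.sqrt (1 - Real.cos t) ≤ Real.sqrt (Real.sin t ^ 2) := Real.sqrt_le_sqrt h1
        _ = Real.sin t := Real.sqrt_sq hsin.le
    have hintle : (∫ s in (0:ℝ)..t, Real.sin s * ∫ θ in (0:ℝ)..(2*π), F s θ)
        ≤ Real.sin t * (Real.sqrt (2*π) * Real.sqrt S) := by
      have h1 : (∫ s in (0:ℝ)..t, Real.sin s * ∫ θ in (0:ℝ)..(2*π), F s θ)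
          ≤ Real.sqrt ((1 - Real.cos t) * ((2*π) * S)) := by
        calc (∫ s in (0:ℝ)..t, Real.sin s * ∫ θ in (0:ℝ)..(2*π), F s θ)
            ≤ |∫ s in (0:ℝ)..t, Real.sin s * ∫ θ in (0:ℝ)..(2*π), F s θ| := le_abs_self _
          _ = Real.sqrt ((∫ s in (0:ℝ)..t, Real.sin s * ∫ θ in (0:ℝ)..(2*π), F s θ)^2) :=
              (Real.sqrt_sq_eq_abs _).symm
          _ ≤ Real.sqrt ((1 - Real.cos t) * ((2*π) * S)) := Real.sqrt_le_sqrt hsq'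
      have h2 : Real.sqrt ((1 - Real.cos t) * ((2*π) * S))
          = Real.sqrt (1 - Real.cos t) * (Real.sqrt (2*π) * Real.sqrt S) := by
        rw [Real.sqrt_mul h1mc, Real.sqrt_mul h2pi]
      have h3 : Real.sqrt (1 - Real.cos t) * (Real.sqrt (2*π) * Real.sqrt S)
          ≤ Real.sin t * (Real.sqrt (2*π) * Real.sqrt S) :=
        mul_le_mul_of_nonneg_right hsqrtle
          (mul_nonneg (Real.sqrt_nonneg _) (Real.sqrt_nonneg _))
      linarith [h1, h2 ▸ h1]
    have hfinal := le_trans hBle hintle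
    exact le_of_mul_le_mul_left (by linarith [hfinal]) hsin
  -- identify sphereL2 with √S
  have h2πpos : (0:ℝ) < 2*π := by positivity
  have hsqrt2π : (0:ℝ) < Real.sqrt (2*π) := Real.sqrt_pos.2 h2πpos
  have hL2eq : sphereL2 F = Real.sqrt S := by
    unfold sphereL2 sphereIntegral
    rw [hS_def]
    congr 1
    refine intervalIntegral.integral_congr fun s _ => ?_
    exact intervalIntegral.integral_mul_const _ _
  set C : ℝ := Real.sqrt S / Real.sqrt (2*π) with hC_def
  have h2piC : Real.sqrt (2*π) * Real.sqrt S = 2*π * C := by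
    rw [hC_def]
    have hm := Real.mul_self_sqrt h2pi
    rw [mul_div_assoc', eq_div_iff hsqrt2π.ne']
    linear_combination Real.sqrt S * hm
  -- monotonicity of φ(s) = C s - I0 s / (2π)
  have hφmono : MonotoneOn (fun s : ℝ => C * s - (∫ θ in (0:ℝ)..(2*π), F s θ) / (2*π))
      (Set.Icc 0 r) := by
    have hder : ∀ s : ℝ, HasDerivAt
        (fun x : ℝ => C * x - (∫ θ in (0:ℝ)..(2*π), F x θ) / (2*π))
        (C - (∫ θ in (0:ℝ)..(2*π), d1 (s, θ)) / (2*π)) s := by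
      intro s
      have h1 : HasDerivAt (fun x : ℝ => C * x) C s := by
        simpa using (hasDerivAt_id s).const_mul C
      exact h1.sub ((hI0' s).div_const (2*π))
    refine monotoneOn_of_deriv_nonneg (convex_Icc 0 r) ?_ ?_ ?_
    · exact ((continuous_const.mul continuous_id).sub (hI0c.div_const _)).continuousOn
    · intro x _
      exact ((hder x).differentiableAt).differentiableWithinAt
    · intro x hx
      rw [interior_Icc] at hx
      rw [(hder x).deriv]
      have hb := hI1bound x hx.1 (by linarith [hx.2])
      rw [h2piC] at hb
      have : (∫ θ in (0:ℝ)..(2*π), d1 (x, θ)) / (2*π) ≤ C := by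
        rw [div_le_iff₀ h2πpos]
        linarith
      linarith
  have hmono0r := hφmono (Set.left_mem_Icc.2 hr.le) (Set.right_mem_Icc.2 hr.le) hr.le
  simp only [mul_zero] at hmono0r
  have hI00 : (∫ θ in (0:ℝ)..(2*π), F 0 θ) = 2*π * F 0 0 := by
    rw [intervalIntegral.integral_congr (g := fun _ => F 0 0) fun θ _ => hpole₀ θ 0]
    simp [mul_comm]
  have hF00 : (∫ θ in (0:ℝ)..(2*π), F 0 θ) / (2*π) = F 0 0 := by
    rw [hI00]
    field_simp
  rw [hL2eq]
  unfold circleAvg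
  rw [← hC_def]
  linarith [hmono0r, hF00]
end

section
/- Let f be a smooth function on the standard round 2-sphere S² satisfying Δf ≤ f and ‖f‖_{L²(S²)} ≤ C√(2π) for some constant C > 0. Then for every x ∈ S², the function r ↦ ⨍_{∂B_r(x)} (f − C r) ds is non-increasing on (0, π/2]. -/
open Real MeasureTheory intervalIntegral

open Function

/-- First partial derivative (in `r`). -/
noncomputable def pd1 (G : ℝ → ℝ → ℝ) (r θ : ℝ) : ℝ := fderiv ℝ (uncurry G) (r, θ) (1, 0)
/-- Second partial derivative (in `θ`). -/
noncomputable def pd2 (G : ℝ → ℝ → ℝ) (r θ : ℝ) : ℝ := fderiv ℝ (uncurry G) (r, θ) (0, 1)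

lemma contDiff_pd1 {G : ℝ → ℝ → ℝ} (hG : ContDiff ℝ (⊤ : ℕ∞) (uncurry G)) :
    ContDiff ℝ (⊤ : ℕ∞) (uncurry (pd1 G)) :=
  (hG.fderiv_right (by simp)).clm_apply contDiff_const

lemma contDiff_pd2 {G : ℝ → ℝ → ℝ} (hG : ContDiff ℝ (⊤ : ℕ∞) (uncurry G)) :
    ContDiff ℝ (⊤ : ℕ∞) (uncurry (pd2 G)) :=
  (hG.fderiv_right (by simp)).clm_apply contDiff_const

lemma hasDerivAt_pd1 {G : ℝ → ℝ → ℝ} (hG : ContDiff ℝ (⊤ : ℕ∞) (uncurry G)) (r θ : ℝ) :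
    HasDerivAt (fun s => G s θ) (pd1 G r θ) r := by
  have h : HasFDerivAt (uncurry G) (fderiv ℝ (uncurry G) (r, θ)) (r, θ) :=
    (hG.differentiable (by simp) (r, θ)).hasFDerivAt
  have hl : HasDerivAt (fun t : ℝ => ((t, θ) : ℝ × ℝ)) (1, 0) r :=
    (hasDerivAt_id r).prodMk (hasDerivAt_const r θ)
  exact h.comp_hasDerivAt r hl

lemma hasDerivAt_pd2 {G : ℝ → ℝ → ℝ} (hG : ContDiff ℝ (⊤ : ℕ∞) (uncurry G)) (r θ : ℝ) :
    HasDerivAt (G r) (pd2 G r θ) θ := by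
  have h : HasFDerivAt (uncurry G) (fderiv ℝ (uncurry G) (r, θ)) (r, θ) :=
    (hG.differentiable (by simp) (r, θ)).hasFDerivAt
  have hl : HasDerivAt (fun t : ℝ => ((r, t) : ℝ × ℝ)) (0, 1) θ :=
    (hasDerivAt_const θ r).prodMk (hasDerivAt_id θ)
  exact h.comp_hasDerivAt θ hl

lemma contLeft {G : ℝ → ℝ → ℝ} (hG : Continuous (uncurry G)) (θ : ℝ) :
    Continuous (fun s => G s θ) :=
  hG.comp (continuous_id.prodMk continuous_const)

lemma contRight {G : ℝ → ℝ → ℝ} (hG : Continuous (uncurry G)) (r : ℝ) :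
    Continuous (G r) :=
  hG.comp (continuous_const.prodMk continuous_id)
lemma swapInt (g : ℝ → ℝ → ℝ) (hg : Continuous (uncurry g)) (a b c d : ℝ) (hcd : c ≤ d) :
    (∫ u in a..b, ∫ θ in c..d, g u θ) = ∫ θ in c..d, ∫ u in a..b, g u θ := by
  have core : ∀ a b : ℝ, a ≤ b →
      (∫ u in a..b, ∫ θ in c..d, g u θ) = ∫ θ in c..d, ∫ u in a..b, g u θ := by
    intro a b hab
    have hint : Integrable (uncurry g)
        (((volume : Measure ℝ).restrict (Set.Ioc a b)).prod
          ((volume : Measure ℝ).restrict (Set.Ioc c d))) := by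
      rw [Measure.prod_restrict]
      have h1 : IntegrableOn (uncurry g) (Set.Icc a b ×ˢ Set.Icc c d)
          ((volume : Measure ℝ).prod (volume : Measure ℝ)) := by
        rw [← Measure.volume_eq_prod]
        exact hg.continuousOn.integrableOn_compact (isCompact_Icc.prod isCompact_Icc)
      exact h1.mono_set (Set.prod_mono Set.Ioc_subset_Icc_self Set.Ioc_subset_Icc_self)
    rw [intervalIntegral.integral_of_le hab, intervalIntegral.integral_of_le hcd]
    simp_rw [intervalIntegral.integral_of_le hcd, intervalIntegral.integral_of_le hab]
    exact MeasureTheory.integral_integral_swap hint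
  rcases le_total a b with hab | hba
  · exact core a b hab
  · calc (∫ u in a..b, ∫ θ in c..d, g u θ)
        = -∫ u in b..a, ∫ θ in c..d, g u θ := intervalIntegral.integral_symm b a
      _ = -∫ θ in c..d, ∫ u in b..a, g u θ := by rw [core b a hba]
      _ = ∫ θ in c..d, -∫ u in b..a, g u θ := (intervalIntegral.integral_neg).symm
      _ = ∫ θ in c..d, ∫ u in a..b, g u θ := by
          refine intervalIntegral.integral_congr fun θ _ => ?_
          exact (intervalIntegral.integral_symm b a).symm

lemma hasDerivAt_intInt {G : ℝ → ℝ → ℝ} (hG : ContDiff ℝ (⊤ : ℕ∞) (uncurry G)) (r : ℝ) :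
    HasDerivAt (fun s => ∫ θ in (0:ℝ)..(2*π), G s θ)
      (∫ θ in (0:ℝ)..(2*π), pd1 G r θ) r := by
  have hpd : Continuous (uncurry (pd1 G)) := (contDiff_pd1 hG).continuous
  have h2pi : (0:ℝ) ≤ 2*π := by positivity
  have hH : Continuous (fun s => ∫ θ in (0:ℝ)..(2*π), pd1 G s θ) :=
    intervalIntegral.continuous_parametric_intervalIntegral_of_continuous' hpd 0 (2*π)
  have heq : (fun s => ∫ θ in (0:ℝ)..(2*π), G s θ)
      = fun s => (∫ θ in (0:ℝ)..(2*π), G 0 θ)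
          + ∫ u in (0:ℝ)..s, ∫ θ in (0:ℝ)..(2*π), pd1 G u θ := by
    funext s
    have hfub := swapInt (pd1 G) hpd 0 s 0 (2*π) h2pi
    rw [hfub]
    have hsub : ∀ θ : ℝ, (∫ u in (0:ℝ)..s, pd1 G u θ) = G s θ - G 0 θ := fun θ =>
      intervalIntegral.integral_eq_sub_of_hasDerivAt
        (fun u _ => hasDerivAt_pd1 hG u θ)
        ((contLeft hpd θ).intervalIntegrable _ _)
    rw [intervalIntegral.integral_congr (g := fun θ => G s θ - G 0 θ) (fun θ _ => hsub θ)]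
    rw [intervalIntegral.integral_sub ((contRight hG.continuous s).intervalIntegrable _ _)
      ((contRight hG.continuous 0).intervalIntegrable _ _)]
    ring
  rw [heq]
  exact ((hH.integral_hasStrictDerivAt 0 r).hasDerivAt).const_add _

lemma cs_ineq (w f : ℝ → ℝ) (a b : ℝ) (hab : a ≤ b) (hw : Continuous w) (hf : Continuous f)
    (hw0 : ∀ x ∈ Set.Icc a b, 0 ≤ w x) :
    (∫ x in a..b, w x * f x)
      ≤ Real.sqrt (∫ x in a..b, w x) * Real.sqrt (∫ x in a..b, w x * f x ^ 2) := by
  set I := ∫ x in a..b, w x with hIdef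
  set J := ∫ x in a..b, w x * f x with hJdef
  set K := ∫ x in a..b, w x * f x ^ 2 with hKdef
  have hI : 0 ≤ I := intervalIntegral.integral_nonneg hab (fun x hx => hw0 x hx)
  have hK : 0 ≤ K := intervalIntegral.integral_nonneg hab
    (fun x hx => mul_nonneg (hw0 x hx) (sq_nonneg _))
  have key : ∀ t : ℝ, 0 ≤ I * (t * t) + (-2 * J) * t + K := by
    intro t
    have h0 : 0 ≤ ∫ x in a..b, w x * (f x - t) ^ 2 :=
      intervalIntegral.integral_nonneg hab (fun x hx => mul_nonneg (hw0 x hx) (sq_nonneg _))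
    have e1 : (fun x => w x * (f x - t) ^ 2)
        = fun x => t ^ 2 * w x + ((-2 * t) * (w x * f x) + w x * f x ^ 2) :=
      funext fun x => by ring
    have h2 : (∫ x in a..b, w x * (f x - t) ^ 2) = t ^ 2 * I + ((-2 * t) * J + K) := by
      rw [e1, intervalIntegral.integral_add (f := fun x => t ^ 2 * w x)
          (g := fun x => (-2 * t) * (w x * f x) + w x * f x ^ 2) ((continuous_const.mul hw).intervalIntegrable _ _)
          (((continuous_const.mul (hw.mul hf)).add (hw.mul (hf.pow 2))).intervalIntegrable _ _),
        intervalIntegral.integral_add (f := fun x => (-2 * t) * (w x * f x)) (g := fun x => w x * f x ^ 2)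
          ((continuous_const.mul (hw.mul hf)).intervalIntegrable _ _)
          ((hw.mul (hf.pow 2)).intervalIntegrable _ _),
        intervalIntegral.integral_const_mul, intervalIntegral.integral_const_mul]
    nlinarith [h0, h2]
  have hd := discrim_le_zero key
  rw [discrim] at hd
  have hJ2 : J ^ 2 ≤ I * K := by nlinarith
  calc J ≤ |J| := le_abs_self J
    _ = Real.sqrt (J ^ 2) := (Real.sqrt_sq_eq_abs J).symm
    _ ≤ Real.sqrt (I * K) := Real.sqrt_le_sqrt hJ2
    _ = Real.sqrt I * Real.sqrt K := Real.sqrt_mul hI K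

lemma pd2_periodic {G : ℝ → ℝ → ℝ} (hG : ContDiff ℝ (⊤ : ℕ∞) (uncurry G))
    (hper : ∀ r, Function.Periodic (G r) (2*π)) (r : ℝ) :
    Function.Periodic (fun θ => pd2 G r θ) (2*π) := by
  intro θ
  calc pd2 G r (θ + 2*π) = deriv (G r) (θ + 2*π) := ((hasDerivAt_pd2 hG r (θ + 2*π)).deriv).symm
    _ = deriv (fun x => G r (x + 2*π)) θ := (deriv_comp_add_const (G r) (2*π) θ).symm
    _ = deriv (G r) θ := by rw [show (fun x => G r (x + 2*π)) = G r from funext (hper r)]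
    _ = pd2 G r θ := (hasDerivAt_pd2 hG r θ).deriv

lemma integral_pd22_zero {G : ℝ → ℝ → ℝ} (hG : ContDiff ℝ (⊤ : ℕ∞) (uncurry G))
    (hper : ∀ r, Function.Periodic (G r) (2*π)) (r : ℝ) :
    (∫ θ in (0:ℝ)..(2*π), pd2 (pd2 G) r θ) = 0 := by
  have h2G : ContDiff ℝ (⊤ : ℕ∞) (uncurry (pd2 G)) := contDiff_pd2 hG
  have hftc : (∫ θ in (0:ℝ)..(2*π), pd2 (pd2 G) r θ) = pd2 G r (2*π) - pd2 G r 0 :=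
    intervalIntegral.integral_eq_sub_of_hasDerivAt
      (fun θ _ => hasDerivAt_pd2 h2G r θ)
      ((contRight (contDiff_pd2 h2G).continuous r).intervalIntegrable _ _)
  rw [hftc]
  have := pd2_periodic hG hper r 0
  simp only [zero_add] at this
  rw [this]; ring

/-- Interval integral in `θ` over `[0, 2π]`. -/
noncomputable def intA (G : ℝ → ℝ → ℝ) (s : ℝ) : ℝ := ∫ θ in (0:ℝ)..(2*π), G s θ

lemma contA {G : ℝ → ℝ → ℝ} (hG : Continuous (uncurry G)) : Continuous (intA G) :=
  intervalIntegral.continuous_parametric_intervalIntegral_of_continuous' hG 0 (2*π)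

lemma hasDerivAt_intA {G : ℝ → ℝ → ℝ} (hG : ContDiff ℝ (⊤ : ℕ∞) (uncurry G)) (r : ℝ) :
    HasDerivAt (intA G) (intA (pd1 G) r) r :=
  hasDerivAt_intInt hG r

lemma sphLap_eq {F : ℝ → ℝ → ℝ} (hF : ContDiff ℝ (⊤ : ℕ∞) (uncurry F)) (r θ : ℝ) :
    sphLap F r θ = pd1 (pd1 F) r θ + (Real.cos r / Real.sin r) * pd1 F r θ
      + (1 / Real.sin r ^ 2) * pd2 (pd2 F) r θ := by
  have t1 : deriv (fun s => deriv (fun s' => F s' θ) s) r = pd1 (pd1 F) r θ := by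
    have h : (fun s => deriv (fun s' => F s' θ) s) = fun s => pd1 F s θ :=
      funext fun s => (hasDerivAt_pd1 hF s θ).deriv
    rw [h]
    exact (hasDerivAt_pd1 (contDiff_pd1 hF) r θ).deriv
  have t2 : deriv (fun s => F s θ) r = pd1 F r θ := (hasDerivAt_pd1 hF r θ).deriv
  have t3 : deriv (deriv (F r)) θ = pd2 (pd2 F) r θ := by
    have h : deriv (F r) = fun θ' => pd2 F r θ' := funext fun θ' => (hasDerivAt_pd2 hF r θ').deriv
    rw [h]
    exact (hasDerivAt_pd2 (contDiff_pd2 hF) r θ).deriv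
  unfold sphLap
  rw [t1, t2, t3]

/-- If `Δf ≤ f` and `‖f‖_{L²(S²)} ≤ C√(2π)` with `C > 0`, then for each center
point, the spherical mean `r ↦ ⨍_{∂B_r}(f − C r) ds = circleAvg F r − C r` is non-increasing on
`(0, π/2]`. -/
theorem spherical_mean_monotone (F : ℝ → ℝ → ℝ) (C : ℝ) (hC : 0 < C)
    (hsmooth : ContDiff ℝ (⊤ : ℕ∞) (Function.uncurry F))
    (hper : ∀ r, Function.Periodic (F r) (2*π))
    (hpole₀ : ∀ θ₁ θ₂, F 0 θ₁ = F 0 θ₂)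
    (hpoleπ : ∀ θ₁ θ₂, F π θ₁ = F π θ₂)
    (hlap : ∀ r ∈ Set.Ioo (0:ℝ) π, ∀ θ, sphLap F r θ ≤ F r θ)
    (hL2 : sphereL2 F ≤ C * Real.sqrt (2*π)) :
    AntitoneOn (fun r => circleAvg F r - C * r) (Set.Ioc 0 (π/2)) := by
  have hF := hsmooth
  have h2pi : (0:ℝ) < 2*π := by positivity
  have hF1 : ContDiff ℝ (⊤ : ℕ∞) (uncurry (pd1 F)) := contDiff_pd1 hF
  have hAc : Continuous (intA F) := contA hF.continuous
  have hA1c : Continuous (intA (pd1 F)) := contA hF1.continuous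
  have hA2c : Continuous (intA (pd1 (pd1 F))) := contA (contDiff_pd1 hF1).continuous
  have hBc : Continuous (intA (fun r θ => F r θ ^ 2)) :=
    contA (by exact hF.continuous.pow 2)
  have hBnn : ∀ s, 0 ≤ intA (fun r θ => F r θ ^ 2) s := fun s =>
    intervalIntegral.integral_nonneg h2pi.le (fun θ _ => sq_nonneg _)
  -- pointwise derivative bound for ψ = sin · A₁
  have hψ' : ∀ s ∈ Set.Ioo (0:ℝ) π,
      Real.cos s * intA (pd1 F) s + Real.sin s * intA (pd1 (pd1 F)) s
        ≤ Real.sin s * intA F s := by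
    intro s hs
    have hsin : 0 < Real.sin s := Real.sin_pos_of_pos_of_lt_pi hs.1 hs.2
    have hne : Real.sin s ≠ 0 := hsin.ne'
    have c1 : Continuous (fun θ => pd1 F s θ) := contRight hF1.continuous s
    have c11 : Continuous (fun θ => pd1 (pd1 F) s θ) :=
      contRight (contDiff_pd1 hF1).continuous s
    have c22 : Continuous (fun θ => pd2 (pd2 F) s θ) :=
      contRight (contDiff_pd2 (contDiff_pd2 hF)).continuous s
    have cF : Continuous (F s) := contRight hF.continuous s
    have cL : Continuous (fun θ => sphLap F s θ) := by
      have h : (fun θ => sphLap F s θ) = fun θ => pd1 (pd1 F) s θ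
          + (Real.cos s / Real.sin s) * pd1 F s θ
          + (1 / Real.sin s ^ 2) * pd2 (pd2 F) s θ := funext fun θ => sphLap_eq hF s θ
      rw [h]
      exact (c11.add (continuous_const.mul c1)).add (continuous_const.mul c22)
    have hzero : (∫ θ in (0:ℝ)..(2*π), pd2 (pd2 F) s θ) = 0 := integral_pd22_zero hF hper s
    have lhs_eq : Real.cos s * intA (pd1 F) s + Real.sin s * intA (pd1 (pd1 F)) s
        = ∫ θ in (0:ℝ)..(2*π),
            (Real.sin s * sphLap F s θ - (1 / Real.sin s) * pd2 (pd2 F) s θ) := by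
      have e : ∀ θ, Real.sin s * sphLap F s θ - (1 / Real.sin s) * pd2 (pd2 F) s θ
          = Real.cos s * pd1 F s θ + Real.sin s * pd1 (pd1 F) s θ := by
        intro θ
        rw [sphLap_eq hF s θ]
        field_simp
        ring
      rw [intervalIntegral.integral_congr
        (g := fun θ => Real.cos s * pd1 F s θ + Real.sin s * pd1 (pd1 F) s θ)
        (fun θ _ => e θ)]
      rw [intervalIntegral.integral_add (f := fun θ => Real.cos s * pd1 F s θ)
        (g := fun θ => Real.sin s * pd1 (pd1 F) s θ) ((continuous_const.mul c1).intervalIntegrable _ _)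
        ((continuous_const.mul c11).intervalIntegrable _ _),
        intervalIntegral.integral_const_mul, intervalIntegral.integral_const_mul]
      rfl
    rw [lhs_eq]
    rw [intervalIntegral.integral_sub (f := fun θ => Real.sin s * sphLap F s θ)
      (g := fun θ => (1 / Real.sin s) * pd2 (pd2 F) s θ) ((continuous_const.mul cL).intervalIntegrable _ _)
      ((continuous_const.mul c22).intervalIntegrable _ _),
      intervalIntegral.integral_const_mul, intervalIntegral.integral_const_mul,
      hzero, mul_zero, sub_zero]
    have hmono : (∫ θ in (0:ℝ)..(2*π), sphLap F s θ) ≤ intA F s :=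
      intervalIntegral.integral_mono_on h2pi.le (cL.intervalIntegrable _ _)
        (cF.intervalIntegrable _ _) (fun θ _ => hlap s hs θ)
    exact mul_le_mul_of_nonneg_left hmono hsin.le
  -- the main bound on A₁
  have hA1le : ∀ r ∈ Set.Ioc (0:ℝ) (π/2), Real.sin r * intA (pd1 F) r
      ≤ 2*π*C*Real.sqrt (1 - Real.cos r) := by
    intro r hr
    have hr0 : (0:ℝ) ≤ r := hr.1.le
    have hrπ : r < π := lt_of_le_of_lt hr.2 (by linarith [Real.pi_pos])
    -- FTC for ψ
    have hψftc : Real.sin r * intA (pd1 F) r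
        = ∫ s in (0:ℝ)..r, (Real.cos s * intA (pd1 F) s
            + Real.sin s * intA (pd1 (pd1 F)) s) := by
      have h := intervalIntegral.integral_eq_sub_of_hasDerivAt (a := (0:ℝ)) (b := r)
        (f := fun s => Real.sin s * intA (pd1 F) s)
        (f' := fun s => Real.cos s * intA (pd1 F) s + Real.sin s * intA (pd1 (pd1 F)) s)
        (fun s _ => (Real.hasDerivAt_sin s).mul (hasDerivAt_intA hF1 s))
        (((Real.continuous_cos.mul hA1c).add
          (Real.continuous_sin.mul hA2c)).intervalIntegrable _ _)
      rw [h]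
      simp
    -- step 1 : compare with ∫ sin · A
    have hae : ∀ᵐ s ∂(volume.restrict (Set.Icc (0:ℝ) r)), s ≠ 0 := by
      refine ae_iff.2 ?_
      have h : {s : ℝ | ¬ s ≠ 0} = {(0:ℝ)} := by ext s; simp
      rw [h, Measure.restrict_apply (measurableSet_singleton 0)]
      exact le_antisymm (le_trans (measure_mono Set.inter_subset_left) (by simp))
        zero_le
    have hstep1 : (∫ s in (0:ℝ)..r, (Real.cos s * intA (pd1 F) s
          + Real.sin s * intA (pd1 (pd1 F)) s))
        ≤ ∫ s in (0:ℝ)..r, Real.sin s * intA F s := by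
      refine intervalIntegral.integral_mono_ae_restrict hr0
        (((Real.continuous_cos.mul hA1c).add
          (Real.continuous_sin.mul hA2c)).intervalIntegrable _ _)
        ((Real.continuous_sin.mul hAc).intervalIntegrable _ _) ?_
      filter_upwards [hae, ae_restrict_mem measurableSet_Icc] with s hs0 hmem
      exact hψ' s ⟨lt_of_le_of_ne hmem.1 (Ne.symm hs0), lt_of_le_of_lt hmem.2 hrπ⟩
    -- step 2 : Cauchy–Schwarz in θ
    have h1const : (∫ θ in (0:ℝ)..(2*π), (1:ℝ)) = 2*π := by simp
    have hApt : ∀ s, intA F s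
        ≤ Real.sqrt (2*π) * Real.sqrt (intA (fun r θ => F r θ ^ 2) s) := by
      intro s
      have h := cs_ineq (fun _ => (1:ℝ)) (F s) 0 (2*π) h2pi.le continuous_const
        (contRight hF.continuous s) (fun _ _ => zero_le_one)
      simp only [one_mul] at h
      rwa [h1const] at h
    have hstep2 : (∫ s in (0:ℝ)..r, Real.sin s * intA F s)
        ≤ ∫ s in (0:ℝ)..r, Real.sin s
            * (Real.sqrt (2*π) * Real.sqrt (intA (fun r θ => F r θ ^ 2) s)) := by
      refine intervalIntegral.integral_mono_on hr0
        ((Real.continuous_sin.mul hAc).intervalIntegrable _ _)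
        ((Real.continuous_sin.mul
          (continuous_const.mul (Real.continuous_sqrt.comp hBc))).intervalIntegrable _ _)
        (fun s hsm => ?_)
      have hsn : 0 ≤ Real.sin s :=
        Real.sin_nonneg_of_nonneg_of_le_pi hsm.1 (le_trans hsm.2 hrπ.le)
      exact mul_le_mul_of_nonneg_left (hApt s) hsn
    -- step 3 : pull out the constant
    have hstep3 : (∫ s in (0:ℝ)..r, Real.sin s
          * (Real.sqrt (2*π) * Real.sqrt (intA (fun r θ => F r θ ^ 2) s)))
        = Real.sqrt (2*π) * ∫ s in (0:ℝ)..r,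
            Real.sin s * Real.sqrt (intA (fun r θ => F r θ ^ 2) s) := by
      rw [show (fun s => Real.sin s
          * (Real.sqrt (2*π) * Real.sqrt (intA (fun r θ => F r θ ^ 2) s)))
        = fun s => Real.sqrt (2*π)
            * (Real.sin s * Real.sqrt (intA (fun r θ => F r θ ^ 2) s))
        from funext fun s => by ring]
      exact intervalIntegral.integral_const_mul _ _
    -- step 4 : Cauchy–Schwarz in s
    have hstep4 : (∫ s in (0:ℝ)..r, Real.sin s * Real.sqrt (intA (fun r θ => F r θ ^ 2) s))
        ≤ Real.sqrt (∫ s in (0:ℝ)..r, Real.sin s)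
          * Real.sqrt (∫ s in (0:ℝ)..r,
              Real.sin s * Real.sqrt (intA (fun r θ => F r θ ^ 2) s) ^ 2) :=
      cs_ineq Real.sin (fun s => Real.sqrt (intA (fun r θ => F r θ ^ 2) s)) 0 r hr0
        Real.continuous_sin (Real.continuous_sqrt.comp hBc)
        (fun x hx => Real.sin_nonneg_of_nonneg_of_le_pi hx.1 (le_trans hx.2 hrπ.le))
    have hsin_int : (∫ s in (0:ℝ)..r, Real.sin s) = 1 - Real.cos r := by
      rw [integral_sin, Real.cos_zero]
    have hsq_simp : (∫ s in (0:ℝ)..r,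
          Real.sin s * Real.sqrt (intA (fun r θ => F r θ ^ 2) s) ^ 2)
        = ∫ s in (0:ℝ)..r, Real.sin s * intA (fun r θ => F r θ ^ 2) s := by
      refine intervalIntegral.integral_congr (fun s _ => ?_)
      rw [Real.sq_sqrt (hBnn s)]
    -- step 5 : bound the L² piece
    have hstep5 : (∫ s in (0:ℝ)..r, Real.sin s * intA (fun r θ => F r θ ^ 2) s)
        ≤ 2*π*C^2 := by
      have hmono : (∫ s in (0:ℝ)..r, Real.sin s * intA (fun r θ => F r θ ^ 2) s)
          ≤ ∫ s in (0:ℝ)..π, Real.sin s * intA (fun r θ => F r θ ^ 2) s := by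
        refine intervalIntegral.integral_mono_interval le_rfl hr0 hrπ.le ?_
          ((Real.continuous_sin.mul hBc).intervalIntegrable _ _)
        filter_upwards [ae_restrict_mem measurableSet_Ioc] with s hs
        exact mul_nonneg (Real.sin_nonneg_of_nonneg_of_le_pi hs.1.le hs.2) (hBnn s)
      have hSI : (∫ s in (0:ℝ)..π, Real.sin s * intA (fun r θ => F r θ ^ 2) s)
          = sphereIntegral (fun r θ => F r θ ^ 2) := by
        unfold sphereIntegral
        refine intervalIntegral.integral_congr (fun s _ => ?_)
        rw [intervalIntegral.integral_mul_const]
        rw [mul_comm]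
        rfl
      have hSnn : 0 ≤ sphereIntegral (fun r θ => F r θ ^ 2) := by
        rw [← hSI]
        refine intervalIntegral.integral_nonneg Real.pi_pos.le (fun s hsm => ?_)
        exact mul_nonneg (Real.sin_nonneg_of_nonneg_of_le_pi hsm.1 hsm.2) (hBnn s)
      have hSle : sphereIntegral (fun r θ => F r θ ^ 2) ≤ 2*π*C^2 := by
        have h1 : sphereIntegral (fun r θ => F r θ ^ 2) = (sphereL2 F)^2 := by
          rw [sphereL2, Real.sq_sqrt hSnn]
        have h2 : (sphereL2 F)^2 ≤ (C * Real.sqrt (2*π))^2 := by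
          have := Real.sqrt_nonneg (sphereIntegral (fun r θ => (F r θ)^2))
          have hnn : 0 ≤ sphereL2 F := by rw [sphereL2]; positivity
          exact pow_le_pow_left₀ hnn hL2 2
        have h3 : (C * Real.sqrt (2*π))^2 = 2*π*C^2 := by
          rw [mul_pow, Real.sq_sqrt h2pi.le]
          ring
        rw [h1]
        rw [h3] at h2
        exact h2
      exact le_trans hmono (hSI ▸ hSle)
    -- assemble
    have hfinal : Real.sin r * intA (pd1 F) r
        ≤ Real.sqrt (2*π) * (Real.sqrt (1 - Real.cos r) * Real.sqrt (2*π*C^2)) := by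
      rw [hψftc]
      refine le_trans hstep1 (le_trans hstep2 ?_)
      rw [hstep3]
      refine mul_le_mul_of_nonneg_left ?_ (Real.sqrt_nonneg _)
      refine le_trans hstep4 ?_
      rw [hsin_int, hsq_simp]
      exact mul_le_mul (le_refl _) (Real.sqrt_le_sqrt hstep5) (Real.sqrt_nonneg _)
        (Real.sqrt_nonneg _)
    have hq : Real.sqrt (2*π) * Real.sqrt (2*π) = 2*π := Real.mul_self_sqrt h2pi.le
    have hq2 : Real.sqrt (2*π*C^2) = Real.sqrt (2*π) * C := by
      rw [Real.sqrt_mul h2pi.le, Real.sqrt_sq hC.le]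
    calc Real.sin r * intA (pd1 F) r
        ≤ Real.sqrt (2*π) * (Real.sqrt (1 - Real.cos r) * Real.sqrt (2*π*C^2)) := hfinal
      _ = (Real.sqrt (2*π) * Real.sqrt (2*π)) * C * Real.sqrt (1 - Real.cos r) := by
            rw [hq2]; ring
      _ = 2*π*C*Real.sqrt (1 - Real.cos r) := by rw [hq]
  -- deduce A₁ ≤ 2πC on the interior
  have hA1bound : ∀ x ∈ Set.Ioo (0:ℝ) (π/2), intA (pd1 F) x ≤ 2*π*C := by
    intro x hx
    have hxIoc : x ∈ Set.Ioc (0:ℝ) (π/2) := ⟨hx.1, hx.2.le⟩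
    have h1 := hA1le x hxIoc
    have hsin : 0 < Real.sin x :=
      Real.sin_pos_of_pos_of_lt_pi hx.1 (lt_of_lt_of_le hx.2 (by linarith [Real.pi_pos]))
    have hsq : Real.sqrt (1 - Real.cos x) ≤ Real.sin x := by
      have hc0 : 0 ≤ Real.cos x := Real.cos_nonneg_of_mem_Icc
        ⟨by linarith [Real.pi_pos, hx.1], hx.2.le⟩
      have hc1 : Real.cos x ≤ 1 := Real.cos_le_one x
      have h : 1 - Real.cos x ≤ Real.sin x ^ 2 := by
        nlinarith [Real.sin_sq_add_cos_sq x]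
      calc Real.sqrt (1 - Real.cos x) ≤ Real.sqrt (Real.sin x ^ 2) := Real.sqrt_le_sqrt h
        _ = Real.sin x := Real.sqrt_sq hsin.le
    have h2 : Real.sin x * intA (pd1 F) x ≤ 2*π*C * Real.sin x :=
      le_trans h1 (mul_le_mul_of_nonneg_left hsq (by positivity))
    have h3 : intA (pd1 F) x * Real.sin x ≤ 2*π*C * Real.sin x := by
      rwa [mul_comm] at h2
    exact le_of_mul_le_mul_right h3 hsin
  -- conclude antitonicity
  have hderiv : ∀ x, HasDerivAt (fun r => circleAvg F r - C * r)
      (intA (pd1 F) x / (2*π) - C) x := by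
    intro x
    have h1 : HasDerivAt (fun r => intA F r / (2*π)) (intA (pd1 F) x / (2*π)) x :=
      (hasDerivAt_intA hF x).div_const _
    have h2 : HasDerivAt (fun r : ℝ => C * r) C x := by
      simpa using (hasDerivAt_id x).const_mul C
    exact h1.sub h2
  refine antitoneOn_of_deriv_nonpos (convex_Ioc 0 (π/2)) ?_ ?_ ?_
  · exact Continuous.continuousOn ((hAc.div_const _).sub (continuous_const.mul continuous_id))
  · intro x hx
    exact (hderiv x).differentiableAt.differentiableWithinAt
  · intro x hx
    rw [interior_Ioc] at hx
    rw [(hderiv x).deriv]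
    have h := hA1bound x hx
    rw [sub_nonpos, div_le_iff₀ h2pi]
    linarith
end
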